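/- The generalized Laguerre polynomials are orthogonal on [0,∞) with respect to the weight x^α e^{-x}: ∫_0^∞ x^α e^{-x} L_m^{(α)}(x) L_n^{(α)}(x) dx = (Γ(n+α+1)/n!) δ_{mn}, for α > -1. -/

import Mathlib

open Finset MeasureTheory

/-- The generalized Laguerre polynomial `L_n^{(α)}(x) = ∑_{k=0}^n binom(n+α, n-k) (-x)^k / k!`. -/
noncomputable def lagL (n : ℕ) (α : ℝ) (x : ℝ) : ℝ :=
  ∑ k ∈ Finset.range (n + 1),
    ((∏ i ∈ Finset.range (n - k), (α + (k : ℝ) + 1 + (i : ℝ))) / (Nat.factorial (n - k) : ℝ))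
      * (-x) ^ k / (Nat.factorial k : ℝ)

/-!
Expanding both polynomials reduces the integral to the moments `∫ x^(α+i) e^{-x} = Γ(α+i+1)`.
Since `Γ(α+j+k+1) = Γ(α+k+1) (α+k+1)⋯(α+k+j)`, the moment of `x^j` against `L_n` is
`Γ(α+n+1)/n! · ∑_k (-1)^k C(n,k) (α+k+1)⋯(α+k+j)`, an `n`-th finite difference of a monic
polynomial of degree `j` in `k`: it vanishes for `j < n` and is `(-1)^n n!` for `j = n`.
So `L_n` is orthogonal to every polynomial of lower degree, and the diagonal value comes from
the leading coefficient `(-1)^n/n!` of `L_n`.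
-/

open Polynomial Nat

theorem neg_one_pow_mul_neg_one_pow_sub {R : Type*} [Monoid R] [HasDistribNeg R] {k n : ℕ}
    (hk : k ≤ n) : (-1 : R) ^ n * (-1) ^ (n - k) = (-1) ^ k := by
  obtain ⟨d, rfl⟩ := Nat.exists_eq_add_of_le hk
  rw [Nat.add_sub_cancel_left, pow_add, mul_assoc, ← pow_add, ← two_mul, pow_mul, neg_one_sq,
    one_pow, mul_one]

theorem Polynomial.sum_range_neg_one_pow_mul_choose_mul_eval {R : Type*} [CommRing R]
    (P : R[X]) {n : ℕ} (hP : P.natDegree ≤ n) :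
    ∑ k ∈ range (n + 1), (-1 : R) ^ k * n.choose k * P.eval (k : R) =
      if P.natDegree = n then (-1) ^ n * n ! * P.leadingCoeff else 0 := by
  have hΔ : ∑ k ∈ range (n + 1), (-1 : R) ^ k * n.choose k * P.eval (k : R) =
      (-1) ^ n * (fwdDiff 1)^[n] P.eval 0 := by
    rw [fwdDiff_iter_eq_sum_shift, mul_sum]
    refine sum_congr rfl fun k hk => ?_
    rw [← neg_one_pow_mul_neg_one_pow_sub (Nat.lt_succ_iff.mp (mem_range.mp hk))]
    simp only [zsmul_eq_mul, Int.cast_mul, Int.cast_pow, Int.cast_neg, Int.cast_one,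
      Int.cast_natCast, nsmul_eq_mul, mul_one, zero_add]
    ring
  rw [hΔ]
  split_ifs with h
  · subst h
    rw [fwdDiff_iter_degree_eq_factorial]
    simp only [Pi.smul_apply, Pi.natCast_apply, smul_eq_mul]
    ring
  · rw [fwdDiff_iter_eq_zero_of_degree_lt (lt_of_le_of_ne hP h)]
    simp

theorem sum_range_neg_one_pow_mul_choose_mul_prod {R : Type*} [CommRing R] [Nontrivial R]
    (c : R) {j n : ℕ} (hj : j ≤ n) :
    ∑ k ∈ range (n + 1), (-1 : R) ^ k * n.choose k * ∏ i ∈ range j, (c + k + i) =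
      if j = n then (-1 : R) ^ n * n ! else 0 := by
  set P : R[X] := ∏ i ∈ range j, (X + C (c + i))
  have hmonic : ∀ i ∈ range j, (X + C (c + i)).Monic := fun i _ => monic_X_add_C _
  have hdeg : P.natDegree = j := by
    simp only [P, natDegree_prod_of_monic _ _ hmonic, natDegree_X_add_C, sum_const, card_range,
      smul_eq_mul, mul_one]
  have heval (k : ℕ) : P.eval (k : R) = ∏ i ∈ range j, (c + k + i) := by
    simp only [P, eval_prod, eval_add, eval_X, eval_C]
    exact prod_congr rfl fun i _ => by ring
  simp_rw [← heval]
  rw [P.sum_range_neg_one_pow_mul_choose_mul_eval (hdeg ▸ hj), hdeg,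
    (monic_prod_of_monic _ _ hmonic).leadingCoeff, mul_one]

theorem Real.Gamma_add_nat_eq_mul_prod {s : ℝ} (hs : ∀ k : ℕ, s ≠ -(k : ℝ)) (j : ℕ) :
    Real.Gamma (s + j) = Real.Gamma s * ∏ i ∈ range j, (s + i) := by
  induction j with
  | zero => simp
  | succ j ih =>
    have hsj : s + j ≠ 0 := fun h => hs j (eq_neg_of_add_eq_zero_left h)
    rw [Nat.cast_succ, ← add_assoc, Real.Gamma_add_one hsj, ih, prod_range_succ]
    ring

noncomputable def lagCoeff (n : ℕ) (α : ℝ) (k : ℕ) : ℝ :=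
  (∏ i ∈ range (n - k), (α + k + 1 + i)) / (n - k)! * (-1) ^ k / k !

theorem lagL_eq_sum (n : ℕ) (α x : ℝ) :
    lagL n α x = ∑ k ∈ range (n + 1), lagCoeff n α k * x ^ k := by
  refine sum_congr rfl fun k _ => ?_
  rw [lagCoeff, neg_pow]
  ring

theorem lagCoeff_self (n : ℕ) (α : ℝ) : lagCoeff n α n = (-1) ^ n / n ! := by
  simp [lagCoeff]

theorem lagCoeff_mul_Gamma_add {α : ℝ} (hα : -1 < α) {n k : ℕ} (hk : k ≤ n) (j : ℕ) :
    lagCoeff n α k * Real.Gamma (α + j + k + 1) =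
      Real.Gamma (α + n + 1) / n ! * ((-1) ^ k * n.choose k * ∏ i ∈ range j, (α + 1 + k + i)) := by
  have hs : ∀ m : ℕ, α + 1 + k ≠ -(m : ℝ) := fun m =>
    (by linarith [k.cast_nonneg (α := ℝ), m.cast_nonneg (α := ℝ)] : -(m : ℝ) < α + 1 + k).ne'
  have hGamma_n := Real.Gamma_add_nat_eq_mul_prod hs (n - k)
  rw [Nat.cast_sub hk, show α + 1 + k + (n - k) = α + n + 1 by ring] at hGamma_n
  rw [show α + j + k + 1 = α + 1 + k + j by ring, Real.Gamma_add_nat_eq_mul_prod hs, hGamma_n,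
    Nat.cast_choose ℝ hk, lagCoeff]
  simp_rw [add_right_comm α (k : ℝ) 1]
  field_simp

theorem sum_lagCoeff_mul_Gamma_add {α : ℝ} (hα : -1 < α) {j n : ℕ} (hj : j ≤ n) :
    ∑ k ∈ range (n + 1), lagCoeff n α k * Real.Gamma (α + j + k + 1) =
      if j = n then (-1) ^ n * Real.Gamma (α + n + 1) else 0 := by
  rw [sum_congr rfl fun k hk =>
      lagCoeff_mul_Gamma_add hα (Nat.lt_succ_iff.mp (mem_range.mp hk)) j,
    ← mul_sum, sum_range_neg_one_pow_mul_choose_mul_prod _ hj]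
  split_ifs
  · field_simp
  · rw [mul_zero]

theorem integrableOn_rpow_mul_exp_neg {s : ℝ} (hs : -1 < s) :
    IntegrableOn (fun x : ℝ => x ^ s * Real.exp (-x)) (Set.Ioi 0) := by
  simpa [mul_comm] using Real.GammaIntegral_convergent (by linarith : 0 < s + 1)

theorem integral_rpow_mul_exp_neg {s : ℝ} (hs : -1 < s) :
    ∫ x in Set.Ioi (0 : ℝ), x ^ s * Real.exp (-x) = Real.Gamma (s + 1) := by
  simp [Real.Gamma_eq_integral (by linarith : 0 < s + 1), mul_comm]

theorem integral_rpow_mul_exp_neg_mul_sum {ι : Type*} (s : Finset ι) {α : ℝ} (hα : -1 < α)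
    (c : ι → ℝ) (e : ι → ℕ) :
    ∫ x in Set.Ioi (0 : ℝ), x ^ α * Real.exp (-x) * ∑ i ∈ s, c i * x ^ e i =
      ∑ i ∈ s, c i * Real.Gamma (α + e i + 1) := by
  have hα' : ∀ i, -1 < α + e i := fun i => by linarith [(e i).cast_nonneg (α := ℝ)]
  calc ∫ x in Set.Ioi (0 : ℝ), x ^ α * Real.exp (-x) * ∑ i ∈ s, c i * x ^ e i
      = ∫ x in Set.Ioi (0 : ℝ), ∑ i ∈ s, c i * (x ^ (α + e i) * Real.exp (-x)) := by
        refine setIntegral_congr_fun measurableSet_Ioi fun x (hx : 0 < x) => ?_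
        simp_rw [mul_sum, Real.rpow_add hx, Real.rpow_natCast]
        exact sum_congr rfl fun i _ => by ring
    _ = ∑ i ∈ s, c i * Real.Gamma (α + e i + 1) := by
        rw [integral_finsetSum _ fun i _ => (integrableOn_rpow_mul_exp_neg (hα' i)).const_mul _]
        simp_rw [integral_const_mul, integral_rpow_mul_exp_neg (hα' _)]

theorem integral_rpow_mul_exp_neg_mul_sum_mul_sum {α : ℝ} (hα : -1 < α) (a b : ℕ → ℝ)
    (m n : ℕ) :
    ∫ x in Set.Ioi (0 : ℝ), x ^ α * Real.exp (-x) * (∑ j ∈ range m, a j * x ^ j) *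
        (∑ k ∈ range n, b k * x ^ k) =
      ∑ j ∈ range m, a j * ∑ k ∈ range n, b k * Real.Gamma (α + j + k + 1) := by
  have hprod : ∀ x : ℝ, (∑ j ∈ range m, a j * x ^ j) * (∑ k ∈ range n, b k * x ^ k) =
      ∑ p ∈ range m ×ˢ range n, a p.1 * b p.2 * x ^ (p.1 + p.2) := fun x => by
    rw [sum_mul_sum, sum_product]
    exact sum_congr rfl fun j _ => sum_congr rfl fun k _ => by ring
  simp_rw [mul_assoc _ (∑ j ∈ range m, _), hprod]
  rw [integral_rpow_mul_exp_neg_mul_sum _ hα, sum_product]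
  simp_rw [mul_sum, Nat.cast_add, add_assoc α, mul_assoc]

/-- Orthogonality of the generalized Laguerre polynomials on `[0,∞)` with respect to the
weight `x^α e^{-x}`:
`∫_0^∞ x^α e^{-x} L_m^{(α)}(x) L_n^{(α)}(x) dx = (Γ(n+α+1)/n!) δ_{mn}` for `α > -1`. -/
theorem laguerre_orthogonality (α : ℝ) (hα : -1 < α) (m n : ℕ) :
    ∫ x in Set.Ioi (0 : ℝ), x ^ α * Real.exp (-x) * lagL m α x * lagL n α x
      = if m = n then Real.Gamma ((n : ℝ) + α + 1) / (Nat.factorial n : ℝ) else 0 := by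
  wlog hmn : m ≤ n generalizing m n
  · have hnm : n ≠ m := by omega
    simp_rw [mul_right_comm _ (lagL m α _) (lagL n α _)]
    rw [this n m (by omega), if_neg hnm, if_neg hnm.symm]
  simp_rw [lagL_eq_sum]
  rw [integral_rpow_mul_exp_neg_mul_sum_mul_sum hα]
  rw [sum_congr rfl fun j hj => congrArg _
    (sum_lagCoeff_mul_Gamma_add hα ((Nat.lt_succ_iff.mp (mem_range.mp hj)).trans hmn))]
  simp only [mul_ite, mul_zero, sum_ite_eq', mem_range]
  rcases hmn.eq_or_lt with rfl | hlt
  · rw [if_pos m.lt_succ_self, if_pos rfl, lagCoeff_self, add_comm (m : ℝ) α]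
    field_simp
    rw [← pow_mul, pow_mul', neg_one_sq, one_pow, one_mul]
  · rw [if_neg (by omega), if_neg hlt.ne]
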